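/- arXiv:2408.03301 — 5 statements merged into one kernel-verified Lean document; each statement's English description precedes it below -/
import Mathlib

section
/- A rational number a is a square in ℚ_p (equivalently, a quadratic residue modulo p, when p ∤ numerator and denominator of a) for all but finitely many primes p if and only if a is the square of a rational number. -/
/-!
Write `n = a.num * a.den`, so that `a * a.den ^ 2 = n`: `a` is a square in `ℚ` iff `n` is a square
in `ℤ`, and a square in `ℚ_p` whenever `n` is. A `p`-adic square root of an integer is a `p`-adic
integer, so its reduction shows that `n` is a square mod `p`.

Conversely, let `n = k² s` with `s ≠ 1` squarefree. Either `s ∈ {-1, 2, -2}`, or an odd prime `q`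
divides `s` exactly once, and the Chinese remainder theorem with quadratic reciprocity gives an odd
`b` with Jacobi symbol `J(s | b) = -1`. Since `J(s | ·)` only depends on its argument modulo
`4 |s|`, Dirichlet's theorem yields infinitely many primes `p` with `J(s | p) = -1`, and then
`J(n | p) = -1` as soon as `p ∤ k`.
-/

open scoped NumberTheorySymbols

theorem Padic.isSquare_zmod_of_sq_eq_intCast {p : ℕ} [Fact p.Prime] {n : ℤ} {y : ℚ_[p]}
    (hy : y ^ 2 = n) : IsSquare (n : ZMod p) := by
  have hy1 : ‖y‖ ≤ 1 := by
    rw [← pow_le_one_iff_of_nonneg (norm_nonneg y) two_ne_zero, ← norm_pow, hy]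
    exact Padic.norm_int_le_one n
  obtain ⟨z, rfl⟩ : ∃ z : ℤ_[p], (z : ℚ_[p]) = y := ⟨⟨y, hy1⟩, rfl⟩
  have hz : z ^ 2 = n := PadicInt.ext (by simpa using hy)
  exact ⟨PadicInt.toZMod z, by rw [← map_intCast PadicInt.toZMod, ← hz, map_pow, sq]⟩

theorem Rat.mul_den_sq (a : ℚ) : a * a.den ^ 2 = a.num * a.den := by
  rw [sq, ← mul_assoc, Rat.mul_den_eq_num]

theorem Rat.exists_eq_sq_of_isSquare_num_mul_den {a : ℚ} (h : IsSquare (a.num * a.den)) :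
    ∃ r : ℚ, a = r ^ 2 := by
  obtain ⟨k, hk⟩ := h
  refine ⟨k / a.den, ?_⟩
  rw [div_pow, eq_div_iff (by positivity), a.mul_den_sq, sq]
  exact_mod_cast hk

namespace jacobiSym

theorem infinite_setOf_prime_eq_neg_one {a : ℤ} {b : ℕ} (hb : Odd b) (hab : J(a | b) = -1) :
    {p : ℕ | p.Prime ∧ J(a | p) = -1}.Infinite := by
  have hgcd : a.gcd b = 1 := by
    by_contra h
    rw [jacobiSym.eq_zero_iff.mpr ⟨hb.pos.ne', h⟩] at hab
    norm_num at hab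
  have ha : a ≠ 0 := by
    rintro rfl
    have hb1 : b = 1 := by simpa using hgcd
    simp [hb1] at hab
  set N := 4 * a.natAbs
  have : NeZero N := ⟨by positivity⟩
  have hbN : IsUnit (b : ZMod N) := by
    rw [ZMod.isUnit_iff_coprime]
    exact Nat.Coprime.mul_right (Nat.Coprime.pow_right 2 (Nat.coprime_two_right.mpr hb))
      (Nat.Coprime.symm hgcd)
  refine (Nat.infinite_setOfPred_prime_and_eq_mod hbN).mono fun p hp => ⟨hp.1, ?_⟩
  have hpb : p % N = b % N := (ZMod.natCast_eq_natCast_iff' p b N).mp hp.2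
  have h2N : 2 ∣ N := dvd_mul_of_dvd_left (by norm_num) _
  have hp2 : Odd p := by
    rw [Nat.odd_iff, ← Nat.mod_mod_of_dvd p h2N, hpb, Nat.mod_mod_of_dvd b h2N, ← Nat.odd_iff]
    exact hb
  rw [jacobiSym.mod_right a hp2, hpb, ← jacobiSym.mod_right a hb, hab]

theorem exists_odd_eq_neg_one_of_prime_mul {q : ℕ} [Fact q.Prime] (hq : Odd q) {t : ℤ}
    (hqt : ¬(q : ℤ) ∣ t) : ∃ b : ℕ, Odd b ∧ J(q * t | b) = -1 := by
  obtain ⟨c, hc⟩ := FiniteField.exists_nonsquare (F := ZMod q) <| by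
    rw [ZMod.ringChar_zmod_n]
    rintro rfl
    exact absurd hq (by decide)
  have hco : (4 * t.natAbs).Coprime q :=
    Nat.Coprime.mul_left (Nat.Coprime.pow_left 2 (Nat.coprime_two_left.mpr hq))
      ((Nat.Prime.coprime_iff_not_dvd Fact.out).mpr (Int.natCast_dvd.not.mp hqt)).symm
  -- `b ≡ 1 [MOD 4]` allows reciprocity for `J(q | b)`, and `b ≡ 1 [MOD 4 |t|]` makes `J(t | b) = 1`.
  obtain ⟨b, hb4t, hbq⟩ := Nat.chineseRemainder hco 1 c.val
  have hb4 : b % 4 = 1 := Nat.ModEq.of_mul_right _ hb4t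
  have hbodd : Odd b := Nat.odd_iff.mpr (by omega)
  have hqb : J(q | b) = -1 := by
    rw [jacobiSym.quadratic_reciprocity_one_mod_four' hq hb4,
      ZMod.nonsquare_iff_jacobiSym_eq_neg_one, Int.cast_natCast,
      (ZMod.natCast_eq_natCast_iff _ _ _).mpr hbq, ZMod.natCast_zmod_val]
    exact hc
  have htb : J(t | b) = 1 := by
    have ht : t ≠ 0 := by rintro rfl; exact hqt (dvd_zero _)
    rw [jacobiSym.mod_right t hbodd, hb4t, Nat.one_mod_eq_one.mpr (by omega), jacobiSym.one_right]
  exact ⟨b, hbodd, by rw [jacobiSym.mul_left, hqb, htb, mul_one]⟩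

theorem exists_odd_eq_neg_one_of_squarefree {s : ℤ} (hs : Squarefree s) (hs1 : s ≠ 1) :
    ∃ b : ℕ, Odd b ∧ J(s | b) = -1 := by
  obtain ⟨k, hk⟩ | ⟨q, hq, hqs, hqodd⟩ := s.natAbs.eq_two_pow_or_exists_odd_prime_and_dvd
  · have hk1 : k ≤ 1 := by
      by_contra! h
      have := Int.squarefree_natAbs.mpr hs
      rw [hk, Nat.squarefree_pow_iff (by norm_num) (by omega)] at this
      omega
    have : s = -1 ∨ s = 2 ∨ s = -2 := by
      interval_cases k <;> simp only [pow_zero, pow_one, Int.natAbs_eq_iff] at hk <;> omega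
    rcases this with rfl | rfl | rfl
    · exact ⟨3, by decide, by norm_num⟩
    · exact ⟨3, by decide, by norm_num⟩
    · exact ⟨5, by decide, by norm_num⟩
  · have : Fact q.Prime := ⟨hq⟩
    obtain ⟨t, rfl⟩ := Int.natCast_dvd.mpr hqs
    refine exists_odd_eq_neg_one_of_prime_mul hqodd ?_
    rintro ⟨u, rfl⟩
    exact (Nat.prime_iff_prime_int.mp hq).not_isUnit (hs q ⟨u, by ring⟩)

end jacobiSym

theorem Int.exists_sq_mul_squarefree (n : ℤ) : ∃ k s : ℤ, n = k ^ 2 * s ∧ Squarefree s := by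
  obtain ⟨s, k, hks, hs⟩ := Nat.sq_mul_squarefree n.natAbs
  rcases Int.natAbs_eq n with hn | hn
  · exact ⟨k, s, by rw [hn, ← hks]; push_cast; ring, Int.squarefree_natCast.mpr hs⟩
  · exact ⟨k, -s, by rw [hn, ← hks]; push_cast; ring,
      by rwa [← Int.squarefree_natAbs, Int.natAbs_neg, Int.natAbs_natCast]⟩

theorem Int.infinite_setOf_prime_not_isSquare_zmod {n : ℤ} (hn : ¬IsSquare n) :
    {p : ℕ | p.Prime ∧ ¬IsSquare (n : ZMod p)}.Infinite := by
  obtain ⟨k, s, rfl, hs⟩ := Int.exists_sq_mul_squarefree n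
  have hk : k ≠ 0 := by rintro rfl; exact hn ⟨0, by ring⟩
  have hs1 : s ≠ 1 := by rintro rfl; exact hn ⟨k, by ring⟩
  obtain ⟨b, hb, hsb⟩ := jacobiSym.exists_odd_eq_neg_one_of_squarefree hs hs1
  refine ((jacobiSym.infinite_setOf_prime_eq_neg_one hb hsb).sdiff
    (Nat.divisors k.natAbs).finite_toSet).mono fun p hp => ⟨hp.1.1, ?_⟩
  obtain ⟨⟨hp, hsp⟩, hpk⟩ := hp
  have hkp : k.gcd p = 1 :=
    ((Nat.Prime.coprime_iff_not_dvd hp).mpr fun h => hpk (by simpa [hk] using h)).symm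
  apply ZMod.nonsquare_of_jacobiSym_eq_neg_one
  rw [jacobiSym.mul_left, jacobiSym.sq_one' hkp, hsp, one_mul]

/-- A rational number `a` is a square in `ℚ_p` for all but finitely many primes `p`
if and only if `a` is the square of a rational number. -/
theorem square_in_Qp_ae_iff_square (a : ℚ) :
    (∃ S : Finset ℕ, ∀ p : ℕ, ∀ [Fact p.Prime], p ∉ S →
      ∃ y : ℚ_[p], y ^ 2 = (a : ℚ_[p])) ↔ ∃ r : ℚ, a = r ^ 2 := by
  refine ⟨fun ⟨S, hS⟩ => ?_, fun ⟨r, hr⟩ => ⟨∅, fun p _ _ => ⟨r, by rw [hr]; push_cast; rfl⟩⟩⟩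
  by_contra ha
  have hn : ¬IsSquare (a.num * a.den) := fun h => ha (Rat.exists_eq_sq_of_isSquare_num_mul_den h)
  obtain ⟨p, ⟨hp, hpn⟩, hpS⟩ :=
    ((Int.infinite_setOf_prime_not_isSquare_zmod hn).sdiff S.finite_toSet).nonempty
  have : Fact p.Prime := ⟨hp⟩
  obtain ⟨y, hy⟩ := hS p hpS
  refine hpn (Padic.isSquare_zmod_of_sq_eq_intCast (y := y * a.den) ?_)
  rw [mul_pow, hy]
  exact_mod_cast congrArg (Rat.cast : ℚ → ℚ_[p]) a.mul_den_sq
end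

section
/- Let a and b be nonzero integers. Then the set {a, b, ab, ab²} contains a cube in ℚ_p for all but finitely many primes p. -/
/-!
For `p ∤ 3ab`, the residues of `a` and `b` are units of `𝔽_p`. As `𝔽_pˣ` is cyclic, its group of
cube classes has order 1 or 3, so one of the classes of `a, b, ab, ab²` is trivial. A cube root
of such a `c` modulo `p` is a simple root of `X³ - c` over `𝔽_p`, and Hensel's lemma lifts it
to `ℤ_p`.
-/

theorem IsCyclic.exists_pow_three_eq {G : Type*} [CommGroup G] [IsCyclic G] (x y : G) :
    ∃ z : G, z ^ 3 = x ∨ z ^ 3 = y ∨ z ^ 3 = x * y ∨ z ^ 3 = x * y ^ 2 := by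
  obtain ⟨g, hg⟩ := IsCyclic.exists_generator (α := G)
  obtain ⟨m, rfl⟩ := hg x
  obtain ⟨n, rfl⟩ := hg y
  have cube (t : ℤ) : (g ^ t) ^ 3 = g ^ (3 * t) := by group
  have key : 3 ∣ m ∨ 3 ∣ n ∨ 3 ∣ m + n ∨ 3 ∣ m + 2 * n := by
    rcases (by omega : m % 3 = 0 ∨ m % 3 = 1 ∨ m % 3 = 2) with hm | hm | hm <;>
      rcases (by omega : n % 3 = 0 ∨ n % 3 = 1 ∨ n % 3 = 2) with hn | hn | hn <;> omega
  rcases key with ⟨t, ht⟩ | ⟨t, ht⟩ | ⟨t, ht⟩ | ⟨t, ht⟩ <;>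
    refine ⟨g ^ t, ?_⟩ <;> rw [cube, ← ht]
  · exact Or.inl rfl
  · exact Or.inr (Or.inl rfl)
  · exact Or.inr (Or.inr (Or.inl (zpow_add g m n)))
  · exact Or.inr (Or.inr (Or.inr (by group)))

theorem exists_mem_unit_pow_three_eq {R : Type*} [CommRing R] [IsCyclic Rˣ] {a b : ℤ}
    (ha : IsUnit (a : R)) (hb : IsUnit (b : R)) :
    ∃ c ∈ ({a, b, a * b, a * b ^ 2} : Finset ℤ), ∃ z : Rˣ, (z : R) ^ 3 = c := by
  obtain ⟨x, hx⟩ := ha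
  obtain ⟨y, hy⟩ := hb
  obtain ⟨z, hz⟩ := IsCyclic.exists_pow_three_eq x y
  rcases hz with h | h | h | h
  · exact ⟨a, by simp, z, by rw [← Units.val_pow_eq_pow_val, h, hx]⟩
  · exact ⟨b, by simp, z, by rw [← Units.val_pow_eq_pow_val, h, hy]⟩
  · exact ⟨a * b, by simp, z, by rw [← Units.val_pow_eq_pow_val, h]; simp [hx, hy]⟩
  · exact ⟨a * b ^ 2, by simp, z, by rw [← Units.val_pow_eq_pow_val, h]; simp [hx, hy]⟩

theorem ZMod.intCast_ne_zero_of_notMem_primeFactors {p : ℕ} [Fact p.Prime] {n : ℤ} (hn : n ≠ 0)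
    (hp : p ∉ n.natAbs.primeFactors) : (n : ZMod p) ≠ 0 := by
  rw [Ne, ZMod.intCast_zmod_eq_zero_iff_dvd, Int.natCast_dvd]
  exact fun h => hp (Nat.mem_primeFactors.2 ⟨Fact.out, h, Int.natAbs_ne_zero.2 hn⟩)

namespace PadicInt

variable {p : ℕ} [Fact p.Prime]

theorem norm_lt_one_iff_toZMod_eq_zero (x : ℤ_[p]) : ‖x‖ < 1 ↔ toZMod x = 0 := by
  rw [← RingHom.mem_ker, ker_toZMod, IsLocalRing.mem_maximalIdeal, mem_nonunits]

theorem exists_pow_eq_of_toZMod {n : ℕ} (hn : (n : ZMod p) ≠ 0) {c : ℤ_[p]} {z : ZMod p}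
    (hz : z ≠ 0) (hzc : z ^ n = toZMod c) : ∃ y : ℤ_[p], y ^ n = c := by
  obtain ⟨a, rfl⟩ := ZMod.ringHom_surjective toZMod z
  set F : Polynomial ℤ_[p] := .X ^ n - .C c
  have hFa : ‖F.eval a‖ < 1 := by
    rw [norm_lt_one_iff_toZMod_eq_zero]
    simp [F, hzc]
  have hF'a : ‖F.derivative.eval a‖ = 1 := by
    refine (norm_le_one _).antisymm (not_lt.1 fun h => ?_)
    rw [norm_lt_one_iff_toZMod_eq_zero] at h
    simp [F, Polynomial.derivative_X_pow, hn, hz] at h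
  obtain ⟨y, hy, -⟩ :=
    hensels_lemma (F := F) (a := a) (by simpa only [Polynomial.coe_aeval_eq_eval, hF'a, one_pow])
  exact ⟨y, by simpa [F, sub_eq_zero] using hy⟩

end PadicInt

/-- For nonzero integers `a, b`, the set `{a, b, ab, ab²}` contains a cube in `ℚ_p`
for all but finitely many primes `p`. -/
theorem cube_in_Qp_ae (a b : ℤ) (ha : a ≠ 0) (hb : b ≠ 0) :
    ∃ S : Finset ℕ, ∀ p : ℕ, ∀ [Fact p.Prime], p ∉ S →
      ∃ c ∈ ({a, b, a * b, a * b ^ 2} : Finset ℤ),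
        ∃ y : ℚ_[p], y ^ 3 = (c : ℚ_[p]) := by
  refine ⟨(3 * a * b).natAbs.primeFactors, fun p _ hpS => ?_⟩
  have h3ab := ZMod.intCast_ne_zero_of_notMem_primeFactors (by simp [ha, hb]) hpS
  simp only [Int.cast_mul, mul_ne_zero_iff] at h3ab
  obtain ⟨⟨h3, hpa⟩, hpb⟩ := h3ab
  obtain ⟨c, hc, z, hz⟩ := exists_mem_unit_pow_three_eq hpa.isUnit hpb.isUnit
  obtain ⟨y, hy⟩ := PadicInt.exists_pow_eq_of_toZMod (n := 3) (c := c) (by exact_mod_cast h3)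
    z.ne_zero (by rw [hz, map_intCast])
  exact ⟨c, hc, y, by rw [← PadicInt.coe_pow, hy, PadicInt.coe_intCast]⟩
end

section
/- Let q be an odd prime and q₁, q₂ two distinct primes different from q. Then the set {q₁, q₂, q₁q₂, q₁q₂², …, q₁q₂^{q−1}} (of cardinality q+1) contains a q-th power residue modulo p for all but finitely many primes p. -/
/-- For an odd prime `q` and distinct primes `q₁, q₂` different from `q`, the set
`{q₁, q₂, q₁q₂, q₁q₂², …, q₁q₂^(q−1)}` contains a `q`-th power residue modulo `p`
for all but finitely many primes `p`. -/
theorem qth_power_residue_in_family (q q₁ q₂ : ℕ) (hq : q.Prime) (hqodd : q ≠ 2)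
    (hq₁ : q₁.Prime) (hq₂ : q₂.Prime) (hne : q₁ ≠ q₂) (h1 : q₁ ≠ q) (h2 : q₂ ≠ q) :
    ∃ S : Finset ℕ, ∀ p : ℕ, p.Prime → p ∉ S →
      (∃ y : ZMod p, (q₂ : ZMod p) = y ^ q) ∨
        ∃ i : ℕ, i < q ∧ ∃ y : ZMod p, ((q₁ * q₂ ^ i : ℕ) : ZMod p) = y ^ q := by
  refine ⟨∅, fun p hp _ => ?_⟩
  haveI : Fact p.Prime := ⟨hp⟩
  haveI : Fact q.Prime := ⟨hq⟩
  by_cases hp2 : (q₂ : ZMod p) = 0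
  · exact Or.inl ⟨0, by rw [hp2, zero_pow hq.ne_zero]⟩
  by_cases hp1 : (q₁ : ZMod p) = 0
  · refine Or.inr ⟨0, hq.pos, 0, ?_⟩
    push_cast
    rw [hp1, zero_mul, zero_pow hq.ne_zero]
  -- both are units
  obtain ⟨a, ha⟩ := (isUnit_iff_ne_zero.mpr hp1 : IsUnit ((q₁ : ZMod p)))
  obtain ⟨b, hb⟩ := (isUnit_iff_ne_zero.mpr hp2 : IsUnit ((q₂ : ZMod p)))
  obtain ⟨g, hg⟩ := IsCyclic.exists_generator (α := (ZMod p)ˣ)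
  obtain ⟨m, hm⟩ := (Submonoid.mem_powers_iff a g).mp (mem_powers_iff_mem_zpowers.mpr (hg a))
  obtain ⟨n, hn⟩ := (Submonoid.mem_powers_iff b g).mp (mem_powers_iff_mem_zpowers.mpr (hg b))
  by_cases hqN : q ∣ orderOf g
  · by_cases hqn : q ∣ n
    · -- q₂ is a q-th power
      obtain ⟨k, hk⟩ := hqn
      refine Or.inl ⟨(g ^ k : (ZMod p)ˣ), ?_⟩
      rw [← hb, ← hn, hk, pow_mul]
      push_cast
      ring
    · -- choose i with q ∣ m + n * i
      have hn0 : (n : ZMod q) ≠ 0 := fun h =>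
        hqn ((ZMod.natCast_eq_zero_iff n q).mp h)
      set j : ZMod q := (-(m : ZMod q)) * (n : ZMod q)⁻¹ with hj
      refine Or.inr ⟨j.val, j.val_lt, ?_⟩
      have hdvd : q ∣ m + n * j.val := by
        rw [← ZMod.natCast_eq_zero_iff]
        push_cast
        rw [ZMod.natCast_val, ZMod.cast_id, hj]
        field_simp
        ring
      obtain ⟨k, hk⟩ := hdvd
      refine ⟨(g ^ k : (ZMod p)ˣ), ?_⟩
      have : a * b ^ j.val = (g ^ k) ^ q := by
        rw [← hm, ← hn, ← pow_mul, ← pow_mul, ← pow_add, hk, mul_comm q k]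
      push_cast
      rw [← ha, ← hb]
      calc (↑a * (↑b : ZMod p) ^ j.val) = ((a * b ^ j.val : (ZMod p)ˣ) : ZMod p) := by push_cast; ring
        _ = (((g ^ k) ^ q : (ZMod p)ˣ) : ZMod p) := by rw [this]
        _ = ((g ^ k : (ZMod p)ˣ) : ZMod p) ^ q := by push_cast; ring
  · -- q coprime to the group order: everything is a q-th power
    have hcard : Nat.card (ZMod p)ˣ = orderOf g := by
      exact (orderOf_eq_card_of_forall_mem_zpowers hg).symm
    have hcop : (Nat.card (ZMod p)ˣ).Coprime q := by
      rw [hcard]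
      exact (hq.coprime_iff_not_dvd.mpr hqN).symm
    obtain ⟨y, hy⟩ := (powCoprime hcop).surjective b
    rw [powCoprime_apply] at hy
    exact Or.inl ⟨(y : ZMod p), by rw [← hb, ← hy]; push_cast; ring⟩
end

section
/- Let q be an odd prime, m ≥ 1, A = {a₁,…,a_ℓ} a finite set of nonzero integers, and (c₁,…,c_ℓ) ∈ ℤ^ℓ with c_j ≢ 0 (mod q) for all j. Then A contains a q^m-th power in ℚ_p for almost every prime p if and only if {a₁^{c₁}, …, a_ℓ^{c_ℓ}} contains a q^m-th power in ℚ_p for almost every prime p. -/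
private lemma pow_iff_zpow {K : Type*} [Field K] (n : ℕ) (hn : n ≠ 0) (c : ℤ)
    (h : IsCoprime c (n : ℤ)) (x : K) (hx : x ≠ 0) :
    (∃ y : K, y ^ n = x) ↔ (∃ y : K, y ^ n = x ^ c) := by
  constructor
  · rintro ⟨y, rfl⟩
    have hy : y ≠ 0 := fun h0 => hx (by simp [h0, hn])
    refine ⟨y ^ c, ?_⟩
    rw [← zpow_natCast (y ^ c) n, ← zpow_mul, mul_comm, zpow_mul, zpow_natCast]
  · rintro ⟨y, hy⟩
    obtain ⟨u, v, huv⟩ := h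
    have hxc : x ^ c ≠ 0 := zpow_ne_zero c hx
    have hy0 : y ≠ 0 := fun h0 => hxc (by rw [← hy, h0, zero_pow hn])
    refine ⟨y ^ u * x ^ v, ?_⟩
    rw [mul_pow, ← zpow_natCast (y ^ u) n, ← zpow_natCast (x ^ v) n,
      ← zpow_mul, ← zpow_mul, mul_comm u (n : ℤ), zpow_mul, zpow_natCast, hy,
      ← zpow_mul, ← zpow_add₀ hx, mul_comm c u, huv]
    exact zpow_one x
/-- Exponentiation invariance: for an odd prime `q`, `m ≥ 1`, nonzero integers
`a₁, …, a_ℓ` and exponents `c_j ≢ 0 (mod q)`, the set `{a_j}` contains a `q^m`-th power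
in `ℚ_p` for almost every prime `p` iff `{a_j^{c_j}}` does. -/
theorem exponentiation_invariance (q : ℕ) (hq : q.Prime) (hqodd : q ≠ 2)
    (m : ℕ) (hm : 1 ≤ m) (ℓ : ℕ) (a : Fin ℓ → ℤ) (ha : ∀ j, a j ≠ 0)
    (c : Fin ℓ → ℤ) (hc : ∀ j, ¬ (q : ℤ) ∣ c j) :
    (∃ S : Finset ℕ, ∀ p : ℕ, ∀ [Fact p.Prime], p ∉ S →
      ∃ j : Fin ℓ, ∃ y : ℚ_[p], y ^ (q ^ m) = ((a j : ℚ) : ℚ_[p])) ↔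
    (∃ S : Finset ℕ, ∀ p : ℕ, ∀ [Fact p.Prime], p ∉ S →
      ∃ j : Fin ℓ, ∃ y : ℚ_[p], y ^ (q ^ m) = (((a j : ℚ) ^ c j : ℚ) : ℚ_[p])) := by
  have hn : q ^ m ≠ 0 := pow_ne_zero m hq.pos.ne'
  have hcop : ∀ j, IsCoprime (c j) ((q ^ m : ℕ) : ℤ) := by
    intro j
    have hqp : Prime (q : ℤ) := Nat.prime_iff_prime_int.mp hq
    have : IsCoprime ((q : ℤ)) (c j) := (hqp.coprime_iff_not_dvd).mpr (hc j)
    push_cast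
    exact (this.symm).pow_right
  have key : ∀ (p : ℕ) [Fact p.Prime] (j : Fin ℓ),
      (∃ y : ℚ_[p], y ^ (q ^ m) = ((a j : ℚ) : ℚ_[p])) ↔
      (∃ y : ℚ_[p], y ^ (q ^ m) = (((a j : ℚ) ^ c j : ℚ) : ℚ_[p])) := by
    intro p _ j
    have hx : ((a j : ℚ) : ℚ_[p]) ≠ 0 := by
      simp [Rat.cast_ne_zero, ha j]
    have hcast : (((a j : ℚ) ^ c j : ℚ) : ℚ_[p]) = ((a j : ℚ) : ℚ_[p]) ^ c j :=
      map_zpow₀ (Rat.castHom ℚ_[p]) _ _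
    rw [hcast]
    exact pow_iff_zpow (q ^ m) hn (c j) (by exact_mod_cast hcop j) _ hx
  constructor
  · rintro ⟨S, hS⟩
    refine ⟨S, fun p _ hp => ?_⟩
    obtain ⟨j, hj⟩ := hS p hp
    exact ⟨j, (key p j).mp hj⟩
  · rintro ⟨S, hS⟩
    refine ⟨S, fun p _ hp => ?_⟩
    obtain ⟨j, hj⟩ := hS p hp
    exact ⟨j, (key p j).mpr hj⟩
end

section
/- Let n = 2^{a₀}·∏ p_i^{a_i} with a₀ ≥ 1 (n even) and let q₁, q₂ be distinct odd primes. Then the 3-element set {q₁^{n/2}, q₂^{n/2}, (q₁q₂)^{n/2}} contains an n-th power in ℤ_p for almost every prime p, yet contains no perfect n-th power. -/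
open Polynomial IsLocalRing

/-!
Modulo an odd prime `p` not dividing `q₁ q₂`, the Legendre symbol is multiplicative,
so one of `q₁`, `q₂`, `q₁ q₂` is a nonzero square mod `p`; by Hensel's lemma it is then a square
`u²` in `ℤ_p`, and `c^(n/2) = (u²)^(n/2) = u^n`. On the other hand each of the three numbers `m`
has a prime `q` with `v_q(m) = 1`, so `m^(n/2) = r^n` would give `n/2 = n · v_q(r)`, which is
impossible for `n ≥ 2`.
-/

theorem HenselianRing.isSquare_of_sub_sq_mem {R : Type*} [CommRing R] {I : Ideal R}
    [HenselianRing R I] (h2 : IsUnit (2 : R)) {x a : R} (ha : IsUnit (Ideal.Quotient.mk I a))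
    (hx : x - a ^ 2 ∈ I) : IsSquare x := by
  have hroot : (X ^ 2 - C x).eval a ∈ I := by
    simpa [neg_sub] using I.neg_mem hx
  have hsimple : IsUnit (Ideal.Quotient.mk I ((X ^ 2 - C x).derivative.eval a)) := by
    simpa [one_add_one_eq_two] using (h2.map (Ideal.Quotient.mk I)).mul ha
  obtain ⟨b, hb, -⟩ :=
    HenselianRing.is_henselian _ (monic_X_pow_sub_C x two_ne_zero) a hroot hsimple
  exact ⟨b, by simpa [sub_eq_zero, sq, eq_comm] using hb⟩

theorem IsSquare.exists_pow_eq_pow_div_two {M : Type*} [Monoid M] {x : M} (hx : IsSquare x)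
    {n : ℕ} (hn : Even n) : ∃ y, y ^ n = x ^ (n / 2) := by
  obtain ⟨u, rfl⟩ := hx
  exact ⟨u, by rw [← pow_two, ← pow_mul, Nat.two_mul_div_two_of_even hn]⟩

theorem ZMod.natCast_ne_zero_of_prime_of_ne {p q : ℕ} [Fact p.Prime] (hq : q.Prime) (hpq : p ≠ q) :
    (q : ZMod p) ≠ 0 := fun h =>
  hpq <| (Nat.prime_dvd_prime_iff_eq Fact.out hq).mp <| (ZMod.natCast_eq_zero_iff q p).mp h

namespace PadicInt

variable {p : ℕ} [Fact p.Prime]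

theorem isUnit_iff_toZMod_ne_zero {x : ℤ_[p]} : IsUnit x ↔ toZMod x ≠ 0 := by
  rw [← notMem_maximalIdeal, ← ker_toZMod, RingHom.mem_ker]

theorem isSquare_of_isSquare_toZMod (hp : p ≠ 2) {x : ℤ_[p]} (hx0 : toZMod x ≠ 0)
    (hx : IsSquare (toZMod x)) : IsSquare x := by
  obtain ⟨s, hs⟩ := hx
  obtain ⟨a, rfl⟩ := ZMod.ringHom_surjective toZMod s
  have h2 : IsUnit (2 : ℤ_[p]) := by
    rw [isUnit_iff_toZMod_ne_zero, map_ofNat]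
    exact Ring.two_ne_zero (by rwa [ZMod.ringChar_zmod_n])
  have ha : IsUnit a := isUnit_iff_toZMod_ne_zero.mpr fun h => hx0 (by simp [hs, h])
  refine HenselianRing.isSquare_of_sub_sq_mem (I := maximalIdeal ℤ_[p]) h2 (ha.map _) ?_
  rw [← ker_toZMod, RingHom.mem_ker, map_sub, hs, pow_two, map_mul, sub_self]

theorem exists_pow_eq_natCast_pow_div_two (hp : p ≠ 2) {q : ℕ}
    (hq0 : (q : ZMod p) ≠ 0) (hq : IsSquare (q : ZMod p)) {n : ℕ} (hn : Even n) :
    ∃ y : ℤ_[p], y ^ n = ((q ^ (n / 2) : ℕ) : ℤ_[p]) := by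
  push_cast
  exact (isSquare_of_isSquare_toZMod hp (by simpa) (by simpa)).exists_pow_eq_pow_div_two hn

end PadicInt

theorem FiniteField.isSquare_or_isSquare_or_isSquare_mul {F : Type*} [Field F] [Fintype F]
    (a b : F) : IsSquare a ∨ IsSquare b ∨ IsSquare (a * b) := by
  classical
  by_cases ha : a = 0
  · exact .inl (ha ▸ IsSquare.zero)
  by_cases hb : b = 0
  · exact .inr (.inl (hb ▸ IsSquare.zero))
  by_contra! h
  have hab := (quadraticChar_one_iff_isSquare (mul_ne_zero ha hb)).not.mpr h.2.2
  rw [map_mul, quadraticChar_neg_one_iff_not_isSquare.mpr h.1,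
    quadraticChar_neg_one_iff_not_isSquare.mpr h.2.1] at hab
  exact hab (by norm_num)

theorem Nat.dvd_of_pow_eq_pow_of_factorization_eq_one {m q k r n : ℕ}
    (hm : m.factorization q = 1) (h : m ^ k = r ^ n) : n ∣ k := by
  have := congrArg (·.factorization q) h
  simp only [Nat.factorization_pow, Finsupp.smul_apply, smul_eq_mul, hm, mul_one] at this
  exact ⟨_, this⟩

theorem Nat.pow_div_two_ne_pow {m q n : ℕ} (hm : m.factorization q = 1) (hn : 2 ≤ n) (r : ℕ) :
    m ^ (n / 2) ≠ r ^ n := fun h => by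
  have := Nat.eq_zero_of_dvd_of_lt (Nat.dvd_of_pow_eq_pow_of_factorization_eq_one hm h)
    (Nat.div_lt_self (by omega) one_lt_two)
  omega

theorem optimality_even_general (n : ℕ) (hn : 0 < n) (hneven : Even n)
    (q₁ q₂ : ℕ) (hq₁ : q₁.Prime) (hq₂ : q₂.Prime)
    (hne : q₁ ≠ q₂) :
    (∃ S : Finset ℕ, ∀ p : ℕ, ∀ [Fact p.Prime], p ∉ S →
      ∃ c ∈ ({q₁ ^ (n / 2), q₂ ^ (n / 2), (q₁ * q₂) ^ (n / 2)} : Finset ℕ),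
        ∃ y : ℤ_[p], y ^ n = (c : ℤ_[p])) ∧
    ∀ c ∈ ({q₁ ^ (n / 2), q₂ ^ (n / 2), (q₁ * q₂) ^ (n / 2)} : Finset ℕ),
      ¬ ∃ r : ℕ, c = r ^ n := by
  refine ⟨⟨{2, q₁, q₂}, fun p _ hp => ?_⟩, ?_⟩
  · simp only [Finset.mem_insert, Finset.mem_singleton, not_or] at hp
    obtain ⟨hp2, hpq₁, hpq₂⟩ := hp
    have h₁ := ZMod.natCast_ne_zero_of_prime_of_ne hq₁ hpq₁
    have h₂ := ZMod.natCast_ne_zero_of_prime_of_ne hq₂ hpq₂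
    rcases FiniteField.isSquare_or_isSquare_or_isSquare_mul (q₁ : ZMod p) q₂ with h | h | h
    · exact ⟨_, by simp, PadicInt.exists_pow_eq_natCast_pow_div_two hp2 h₁ h hneven⟩
    · exact ⟨_, by simp, PadicInt.exists_pow_eq_natCast_pow_div_two hp2 h₂ h hneven⟩
    · refine ⟨_, by simp,
        PadicInt.exists_pow_eq_natCast_pow_div_two (q := q₁ * q₂) hp2 ?_ ?_ hneven⟩
      · exact_mod_cast mul_ne_zero h₁ h₂
      · exact_mod_cast h
  · have h2n : 2 ≤ n := by obtain ⟨k, rfl⟩ := hneven; omega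
    have hprod : (q₁ * q₂).factorization q₁ = 1 := by
      simp [Nat.factorization_mul hq₁.ne_zero hq₂.ne_zero, hq₁.factorization_self,
        Nat.factorization_eq_zero_of_not_dvd ((Nat.prime_dvd_prime_iff_eq hq₁ hq₂).not.mpr hne)]
    simp only [Finset.mem_insert, Finset.mem_singleton]
    rintro c (rfl | rfl | rfl) ⟨r, hr⟩
    · exact Nat.pow_div_two_ne_pow hq₁.factorization_self h2n r hr
    · exact Nat.pow_div_two_ne_pow hq₂.factorization_self h2n r hr
    · exact Nat.pow_div_two_ne_pow hprod h2n r hr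

/-- Optimality for even `n`: for even `n > 0` and distinct odd primes `q₁, q₂`, the set
`{q₁^(n/2), q₂^(n/2), (q₁q₂)^(n/2)}` contains an `n`-th power in `ℤ_p` for almost every
prime `p`, yet contains no perfect `n`-th power. -/
theorem optimality_even (n : ℕ) (hn : 0 < n) (hneven : Even n)
    (q₁ q₂ : ℕ) (hq₁ : q₁.Prime) (hq₂ : q₂.Prime)
    (hq₁odd : q₁ ≠ 2) (hq₂odd : q₂ ≠ 2) (hne : q₁ ≠ q₂) :
    (∃ S : Finset ℕ, ∀ p : ℕ, ∀ [Fact p.Prime], p ∉ S →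
      ∃ c ∈ ({q₁ ^ (n / 2), q₂ ^ (n / 2), (q₁ * q₂) ^ (n / 2)} : Finset ℕ),
        ∃ y : ℤ_[p], y ^ n = (c : ℤ_[p])) ∧
    ∀ c ∈ ({q₁ ^ (n / 2), q₂ ^ (n / 2), (q₁ * q₂) ^ (n / 2)} : Finset ℕ),
      ¬ ∃ r : ℕ, c = r ^ n :=
  optimality_even_general n hn hneven q₁ q₂ hq₁ hq₂ hne
end
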